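/- Let S be a set, A a finite set, H > 0, α > 0, and l ∈ ℕ⁺. For i ∈ [l] let Q_i classes of functions S × A → [0,H] with sup-distance, and let Π = { π : π(a|x) ∝ exp(α Σ_{i=1}^l Q_i(x,a)), Q_i ∈ Q_i } with distance dist(π,π') = sup_x ‖π(·|x) - π'(·|x)‖_1. Then N_{ε/(2H)}(Π) ≤ Π_{i=1}^l N_{ε²/(16 α l H²)}(Q_i). -/

import Mathlib

/-! The cover is the image of the product of the nets under the softmax map. Shifting the logits
by at most `δ` in sup norm multiplies every softmax probability by a factor in `[e^{-2δ}, e^{2δ}]`,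
and two probability vectors within such a ratio of each other are `2 tanh δ ≤ 2 √δ` apart in `ℓ¹`.
For logits `α ∑ᵢ Qᵢ` the nets give `δ = ε² / (16 H²)`, so `2 √δ = ε / (2 H)`. -/

open Real Finset

namespace Real

lemma sinh_le_mul_cosh {x : ℝ} (hx : 0 ≤ x) : sinh x ≤ x * cosh x := by
  have hmono : MonotoneOn (fun y => y * cosh y - sinh y) (Set.Ici 0) := by
    refine monotoneOn_of_hasDerivWithinAt_nonneg (f' := fun y => y * sinh y) (convex_Ici 0)
      (by fun_prop) (fun y _ => ?_) (fun y hy => ?_)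
    · have h := ((hasDerivAt_id' y).mul (hasDerivAt_cosh y)).sub (hasDerivAt_sinh y)
      exact (h.congr_deriv (by ring)).hasDerivWithinAt
    · rw [interior_Ici, Set.mem_Ioi] at hy
      exact mul_nonneg hy.le (sinh_nonneg_iff.2 hy.le)
  simpa using hmono Set.self_mem_Ici hx hx

lemma tanh_le_self {x : ℝ} (hx : 0 ≤ x) : tanh x ≤ x := by
  rw [tanh_eq_sinh_div_cosh, div_le_iff₀ (cosh_pos x)]
  exact sinh_le_mul_cosh hx

lemma tanh_le_sqrt {x : ℝ} (hx : 0 ≤ x) : tanh x ≤ √x := by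
  rcases le_total x 1 with h | h
  · exact (tanh_le_self hx).trans (le_sqrt_of_sq_le (by nlinarith))
  · exact (tanh_lt_one x).le.trans (one_le_sqrt.2 h)

lemma tanh_eq_exp_two_mul (x : ℝ) : tanh x = (exp (2 * x) - 1) / (exp (2 * x) + 1) := by
  rw [tanh_eq, two_mul, exp_add, exp_neg]
  field_simp

end Real

lemma sum_abs_sub_le_of_le_mul {ι : Type*} [Fintype ι] {p q : ι → ℝ} {K : ℝ} (hK : 0 ≤ K)
    (hp : ∑ i, p i = 1) (hq : ∑ i, q i = 1) (hpq : ∀ i, p i ≤ K * q i)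
    (hqp : ∀ i, q i ≤ K * p i) :
    ∑ i, |p i - q i| ≤ 2 * (K - 1) / (K + 1) := by
  have hpoint : ∀ i, |p i - q i| ≤ (K - 1) * min (p i) (q i) := by
    intro i
    rcases le_total (p i) (q i) with h | h
    · rw [abs_of_nonpos (sub_nonpos.2 h), min_eq_left h]; linarith [hqp i]
    · rw [abs_of_nonneg (sub_nonneg.2 h), min_eq_right h]; linarith [hpq i]
  have hmin : 2 * ∑ i, min (p i) (q i) = 2 - ∑ i, |p i - q i| := by
    have h2min : ∀ i, 2 * min (p i) (q i) = p i + q i - |p i - q i| := fun i => by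
      linarith [min_add_max (p i) (q i), max_sub_min_eq_abs' (p i) (q i)]
    rw [mul_sum, sum_congr rfl fun i _ => h2min i, sum_sub_distrib, sum_add_distrib, hp, hq]
    norm_num
  have hsum := sum_le_sum fun i (_ : i ∈ univ) => hpoint i
  rw [← mul_sum] at hsum
  rw [le_div_iff₀ (by linarith)]
  nlinarith

lemma abs_sum_sub_sum_le_card_mul {ι : Type*} [Fintype ι] {u v : ι → ℝ} {η : ℝ}
    (h : ∀ i, |u i - v i| ≤ η) : |∑ i, u i - ∑ i, v i| ≤ Fintype.card ι * η := by
  rw [← sum_sub_distrib]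
  exact (abs_sum_le_sum_abs _ _).trans (by simpa using sum_le_card_nsmul univ _ η fun i _ => h i)

section Softmax

variable {A : Type*} [Fintype A]

noncomputable def softmax (f : A → ℝ) (a : A) : ℝ :=
  exp (f a) / ∑ a', exp (f a')

lemma sum_softmax [Nonempty A] (f : A → ℝ) : ∑ a, softmax f a = 1 := by
  simp only [softmax, ← sum_div]
  exact div_self (sum_pos (fun a _ => exp_pos (f a)) univ_nonempty).ne'

lemma softmax_le_exp_mul_softmax {f g : A → ℝ} {δ : ℝ} (h : ∀ a, |f a - g a| ≤ δ) (a : A) :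
    softmax f a ≤ exp (2 * δ) * softmax g a := by
  have : Nonempty A := ⟨a⟩
  have hnum : exp (f a) ≤ exp δ * exp (g a) := by
    rw [← exp_add, exp_le_exp]
    linarith [(abs_le.1 (h a)).2]
  have hden : exp (-δ) * ∑ a', exp (g a') ≤ ∑ a', exp (f a') := by
    rw [mul_sum]
    refine sum_le_sum fun b _ => ?_
    rw [← exp_add, exp_le_exp]
    linarith [(abs_le.1 (h b)).1]
  calc softmax f a ≤ exp δ * exp (g a) / (exp (-δ) * ∑ a', exp (g a')) :=
        div_le_div₀ (by positivity) hnum (by positivity) hden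
    _ = exp (2 * δ) * softmax g a := by
        rw [mul_div_mul_comm, ← exp_sub, softmax]
        ring_nf

lemma sum_abs_softmax_sub_le_two_mul_tanh [Nonempty A] {f g : A → ℝ} {δ : ℝ}
    (h : ∀ a, |f a - g a| ≤ δ) : ∑ a, |softmax f a - softmax g a| ≤ 2 * tanh δ := by
  have hgf : ∀ a, |g a - f a| ≤ δ := fun a => abs_sub_comm (g a) (f a) ▸ h a
  rw [tanh_eq_exp_two_mul, ← mul_div_assoc]
  exact sum_abs_sub_le_of_le_mul (exp_pos _).le (sum_softmax f) (sum_softmax g)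
    (softmax_le_exp_mul_softmax h) (softmax_le_exp_mul_softmax hgf)

lemma sum_abs_softmax_sub_le_two_mul_sqrt [Nonempty A] {f g : A → ℝ} {δ : ℝ}
    (h : ∀ a, |f a - g a| ≤ δ) : ∑ a, |softmax f a - softmax g a| ≤ 2 * √δ := by
  have hδ : 0 ≤ δ := (abs_nonneg _).trans (h (Classical.arbitrary A))
  exact (sum_abs_softmax_sub_le_two_mul_tanh h).trans (by gcongr; exact tanh_le_sqrt hδ)

end Softmax

theorem covering_softmax_policy_class_general {S A : Type*} [Fintype A] [Nonempty A]
    (H α ε : ℝ) (hH : 0 < H) (hα : 0 < α) (hε : 0 < ε)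
    (l : ℕ)
    (𝒬 : Fin l → Set (S → A → ℝ))
    (C : Fin l → Finset (S → A → ℝ))
    (hCnet : ∀ i, ∀ Q ∈ 𝒬 i, ∃ Q' ∈ C i,
      ∀ x a, |Q x a - Q' x a| ≤ ε ^ 2 / (16 * α * l * H ^ 2)) :
    ∃ CP : Finset (S → A → ℝ), CP.card ≤ ∏ i, (C i).card ∧
      ∀ Q : Fin l → (S → A → ℝ), (∀ i, Q i ∈ 𝒬 i) →
        ∃ π' ∈ CP, ∀ x, ∑ a,
          |Real.exp (α * ∑ i, Q i x a) / (∑ a', Real.exp (α * ∑ i, Q i x a')) -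
            π' x a| ≤ ε / (2 * H) := by
  classical
  let policy : (Fin l → S → A → ℝ) → S → A → ℝ := fun Q x => softmax fun a => α * ∑ i, Q i x a
  refine ⟨(Fintype.piFinset C).image policy, card_image_le.trans (Fintype.card_piFinset C).le,
    fun Q hQ => ?_⟩
  choose Q' hQ'C hQQ' using fun i => hCnet i (Q i) (hQ i)
  refine ⟨policy Q', mem_image_of_mem policy (Fintype.mem_piFinset.2 hQ'C), fun x => ?_⟩
  have hperturb (a : A) :
      |α * ∑ i, Q i x a - α * ∑ i, Q' i x a| ≤ ε ^ 2 / (16 * H ^ 2) := calc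
    _ = α * |∑ i, Q i x a - ∑ i, Q' i x a| := by rw [← mul_sub, abs_mul, abs_of_pos hα]
    _ ≤ α * (l * (ε ^ 2 / (16 * α * l * H ^ 2))) := by
        gcongr
        simpa using abs_sum_sub_sum_le_card_mul fun i => hQQ' i x a
    _ ≤ ε ^ 2 / (16 * H ^ 2) := by
        rcases l.eq_zero_or_pos with rfl | hl
        · simp only [CharP.cast_eq_zero, zero_mul, mul_zero]
          positivity
        · field_simp
          rfl
  calc _ ≤ 2 * √(ε ^ 2 / (16 * H ^ 2)) := sum_abs_softmax_sub_le_two_mul_sqrt hperturb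
    _ = ε / (2 * H) := by
        rw [show ε ^ 2 / (16 * H ^ 2) = (ε / (4 * H)) ^ 2 by ring, sqrt_sq (by positivity)]
        ring

theorem covering_softmax_policy_class {S A : Type*} [Fintype A] [Nonempty A]
    (H α ε : ℝ) (hH : 0 < H) (hα : 0 < α) (hε : 0 < ε)
    (l : ℕ) (hl : 0 < l)
    (𝒬 : Fin l → Set (S → A → ℝ))
    (h𝒬 : ∀ i, ∀ Q ∈ 𝒬 i, ∀ x a, 0 ≤ Q x a ∧ Q x a ≤ H)
    (C : Fin l → Finset (S → A → ℝ)) (hCsub : ∀ i, ↑(C i) ⊆ 𝒬 i)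
    (hCnet : ∀ i, ∀ Q ∈ 𝒬 i, ∃ Q' ∈ C i,
      ∀ x a, |Q x a - Q' x a| ≤ ε ^ 2 / (16 * α * l * H ^ 2)) :
    ∃ CP : Finset (S → A → ℝ), CP.card ≤ ∏ i, (C i).card ∧
      ∀ Q : Fin l → (S → A → ℝ), (∀ i, Q i ∈ 𝒬 i) →
        ∃ π' ∈ CP, ∀ x, ∑ a,
          |Real.exp (α * ∑ i, Q i x a) / (∑ a', Real.exp (α * ∑ i, Q i x a')) -
            π' x a| ≤ ε / (2 * H) :=
  covering_softmax_policy_class_general H α ε hH hα hε l 𝒬 C hCnet
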